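/- arXiv:1806.05869 — 2 statements merged into one kernel-verified Lean document; each statement's English description precedes it below -/
import Mathlib

section
/- Let p be a prime and r ≥ 0 an integer. Then ∫_ℝ X_r(x) · (p + 1)/((√p + 1/√p)² − x²) dμ_∞(x) equals p^{−r/2} if r is even, and equals 0 if r is odd. -/
/-!
Substituting `x = 2 cos θ` turns `X_r(x) dμ_∞(x)` into `(2/π) sin((r+1)θ) sin θ dθ` on `[0, π]`
and the Plancherel density into `(q+1)/D(θ)`, where `q = p` and `D(θ) = q + q⁻¹ - 2 cos 2θ`
(`poissonDenom`). Since `sin((r+1)θ) sin θ = (cos rθ - cos (r+2)θ)/2`, everything reduces to the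
moments `E(m) = ∫₀^π cos(mθ)/D(θ) dθ`, `m ∈ ℤ` (`cosMoment`). From
`2 cos 2θ cos mθ = cos (m+2)θ + cos (m-2)θ` they satisfy
`E(m+2) + E(m-2) - (q+q⁻¹) E(m) = -∫₀^π cos mθ dθ`, which vanishes for `m ≠ 0`.
Hence `E(m+2) - q⁻¹ E(m)` gets multiplied by `q` whenever `m ≥ -1` increases by `2`; being
bounded by `(1 + q⁻¹) E(0)`, it vanishes. So `E(m+2) = q⁻¹ E(m)`, which at `m = -1` forces
`E(1) = 0`, and the recurrence at `m = 0` gives `E(0) = π/(q - q⁻¹)`.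
-/

open MeasureTheory

/-- `X ℓ x = U ℓ (x/2)`, the Chebyshev polynomial normalized by
`X ℓ (2 cos θ) = sin ((ℓ+1) θ) / sin θ`. -/
noncomputable def chebX (ℓ : ℕ) (x : ℝ) : ℝ :=
  (Polynomial.Chebyshev.U ℝ (ℓ : ℤ)).eval (x / 2)

/-- The Sato–Tate measure on `ℝ`: density `(1/π) √(1 - x²/4)` on `[-2, 2]`,
zero outside. -/
noncomputable def satoTate : Measure ℝ :=
  volume.withDensity (fun x => ENNReal.ofReal ((1 / Real.pi) * Real.sqrt (1 - x ^ 2 / 4)))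

open Real Set intervalIntegral

theorem integral_satoTate_eq_integral_cos {f : ℝ → ℝ} (hf : ContinuousOn f (Icc (-2) 2)) :
    ∫ x, f x ∂satoTate = 2 / π * ∫ θ in 0..π, f (2 * cos θ) * sin θ ^ 2 := by
  set w : ℝ → ℝ := fun x => 1 / π * √(1 - x ^ 2 / 4) with hw_def
  have hw : Continuous w := by fun_prop
  have hw_zero : ∀ x ∉ Icc (-2 : ℝ) 2, w x * f x = 0 := by
    intro x hx
    have : 1 - x ^ 2 / 4 ≤ 0 := by
      rw [mem_Icc, not_and_or, not_le, not_le] at hx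
      rcases hx with hx | hx <;> nlinarith
    simp [hw_def, sqrt_eq_zero_of_nonpos this]
  have hw_cos : ∀ θ ∈ uIcc π 0, w (2 * cos θ) = sin θ / π := by
    intro θ hθ
    rw [uIcc_of_ge pi_pos.le] at hθ
    rw [hw_def, sin_eq_sqrt_one_sub_cos_sq hθ.1 hθ.2]
    ring_nf
  have hderiv : ∀ θ ∈ uIcc π 0, HasDerivAt (fun θ => 2 * cos θ) (-(2 * sin θ)) θ := by
    intro θ _
    simpa using (hasDerivAt_cos θ).const_mul 2
  have hmaps : MapsTo (fun θ => 2 * cos θ) (uIcc π 0) (Icc (-2) 2) := fun θ _ =>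
    ⟨by nlinarith [neg_one_le_cos θ], by nlinarith [cos_le_one θ]⟩
  calc ∫ x, f x ∂satoTate = ∫ x, w x * f x := by
        rw [satoTate, integral_withDensity_eq_integral_toReal_smul (by fun_prop)
          (ae_of_all _ fun _ => ENNReal.ofReal_lt_top)]
        congr 1 with x
        rw [ENNReal.toReal_ofReal (by positivity), smul_eq_mul]
    _ = ∫ x in -2..2, w x * f x := by
        rw [integral_of_le (by norm_num), ← integral_Icc_eq_integral_Ioc,
          setIntegral_eq_integral_of_forall_compl_eq_zero hw_zero]
    _ = ∫ θ in π..0, (fun x => w x * f x) (2 * cos θ) * -(2 * sin θ) := by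
        simpa [Function.comp_def] using (integral_comp_mul_deriv' (g := fun x => w x * f x)
          hderiv (by fun_prop) ((hw.continuousOn.mul hf).mono (image_subset_iff.mpr hmaps))).symm
    _ = 2 / π * ∫ θ in 0..π, f (2 * cos θ) * sin θ ^ 2 := by
        rw [integral_symm, ← intervalIntegral.integral_const_mul, ← intervalIntegral.integral_neg]
        refine integral_congr fun θ hθ => ?_
        rw [uIcc_comm] at hθ
        simp only [hw_cos θ hθ]
        ring

theorem chebX_two_mul_cos_mul_sin (r : ℕ) (θ : ℝ) :
    chebX r (2 * cos θ) * sin θ = sin ((r + 1) * θ) := by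
  simp [chebX, Polynomial.Chebyshev.U_real_cos]

theorem sqrt_add_inv_sqrt_sq {q : ℝ} (hq : 0 < q) : (√q + 1 / √q) ^ 2 = q + q⁻¹ + 2 := by
  have hs : 0 < √q := sqrt_pos.mpr hq
  field_simp
  rw [sq_sqrt hq.le]
  ring

theorem two_lt_add_inv {q : ℝ} (hq : 1 < q) : 2 < q + q⁻¹ := by
  have hq0 : 0 < q := by linarith
  have hpos : 0 < (q - 1) ^ 2 / q := div_pos (pow_pos (by linarith) 2) hq0
  have hsub : q + q⁻¹ - 2 = (q - 1) ^ 2 / q := by field_simp; ring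
  linarith

theorem eq_zero_of_forall_pow_mul_le {K : Type*} [Field K] [LinearOrder K] [IsStrictOrderedRing K]
    [Archimedean K] {q a B : K} (hq : 1 < q) (ha : 0 ≤ a)
    (h : ∀ k : ℕ, q ^ k * a ≤ B) : a = 0 := by
  by_contra ha0
  obtain ⟨k, hk⟩ := pow_unbounded_of_one_lt (B / a) hq
  rw [div_lt_iff₀ (lt_of_le_of_ne ha (Ne.symm ha0))] at hk
  exact (h k).not_gt hk

theorem integral_cos_int_mul_of_ne_zero {m : ℤ} (hm : m ≠ 0) :
    ∫ θ in 0..π, cos (m * θ) = 0 := by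
  rw [integral_comp_mul_left (fun θ => cos θ) (Int.cast_ne_zero.mpr hm), integral_cos]
  simp [sin_int_mul_pi]

noncomputable def poissonDenom (q θ : ℝ) : ℝ := q + q⁻¹ - 2 * cos (2 * θ)

theorem poissonDenom_pos {q : ℝ} (hq : 1 < q) (θ : ℝ) : 0 < poissonDenom q θ := by
  have := two_lt_add_inv hq
  have := cos_le_one (2 * θ)
  unfold poissonDenom; linarith

@[fun_prop]
theorem continuous_poissonDenom (q : ℝ) : Continuous (poissonDenom q) := by
  unfold poissonDenom; fun_prop

noncomputable def cosMoment (q : ℝ) (m : ℤ) : ℝ :=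
  ∫ θ in 0..π, cos (m * θ) / poissonDenom q θ

section cosMoment

variable {q : ℝ}

theorem intervalIntegrable_cos_div_poissonDenom (hq : 1 < q) (c : ℝ) :
    IntervalIntegrable (fun θ => cos (c * θ) / poissonDenom q θ) volume 0 π :=
  (by fun_prop : Continuous fun θ => cos (c * θ)).div (continuous_poissonDenom q)
    (fun θ => (poissonDenom_pos hq θ).ne') |>.intervalIntegrable _ _

theorem cosMoment_neg (m : ℤ) : cosMoment q (-m) = cosMoment q m := by
  simp [cosMoment]

theorem cosMoment_add_two_add_sub_two (hq : 1 < q) (m : ℤ) :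
    cosMoment q (m + 2) + cosMoment q (m - 2) - (q + q⁻¹) * cosMoment q m =
      -∫ θ in 0..π, cos (m * θ) := by
  have hI := intervalIntegrable_cos_div_poissonDenom hq
  have hintegrand : ∀ θ : ℝ, cos ((m + 2 : ℤ) * θ) / poissonDenom q θ
      + cos ((m - 2 : ℤ) * θ) / poissonDenom q θ
      - (q + q⁻¹) * (cos (m * θ) / poissonDenom q θ) = -cos (m * θ) := by
    intro θ
    have hD := (poissonDenom_pos hq θ).ne'
    have hsum : cos ((m + 2 : ℤ) * θ) + cos ((m - 2 : ℤ) * θ) = 2 * cos (2 * θ) * cos (m * θ) := by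
      push_cast
      rw [add_mul, sub_mul, cos_add, cos_sub]; ring
    have hnum : cos ((m + 2 : ℤ) * θ) + cos ((m - 2 : ℤ) * θ) - (q + q⁻¹) * cos (m * θ) =
        -cos (m * θ) * poissonDenom q θ := by
      unfold poissonDenom; linear_combination hsum
    rw [← mul_div_assoc, ← add_div, ← sub_div, hnum, mul_div_cancel_right₀ _ hD]
  simp only [cosMoment]
  rw [← integral_add (hI _) (hI _), ← intervalIntegral.integral_const_mul,
    ← integral_sub ((hI _).add (hI _)) ((hI _).const_mul _), ← intervalIntegral.integral_neg]
  exact integral_congr fun θ _ => hintegrand θ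

theorem abs_cosMoment_le (hq : 1 < q) (m : ℤ) : |cosMoment q m| ≤ cosMoment q 0 := by
  have hD := fun θ => poissonDenom_pos hq θ
  calc |cosMoment q m| ≤ ∫ θ in 0..π, |cos (m * θ) / poissonDenom q θ| :=
        abs_integral_le_integral_abs pi_pos.le
    _ ≤ cosMoment q 0 := by
        refine integral_mono_on pi_pos.le ?_ ?_ fun θ _ => ?_
        · exact (intervalIntegrable_cos_div_poissonDenom hq _).abs
        · exact intervalIntegrable_cos_div_poissonDenom hq _
        · rw [abs_div, abs_of_pos (hD θ)]
          simpa using div_le_div_of_nonneg_right (abs_cos_le_one _) (hD θ).le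

theorem cosMoment_add_two (hq : 1 < q) {m : ℤ} (hm : -1 ≤ m) :
    cosMoment q (m + 2) = q⁻¹ * cosMoment q m := by
  set d : ℤ → ℝ := fun n => cosMoment q (n + 2) - q⁻¹ * cosMoment q n
  have hstep : ∀ n, -1 ≤ n → d (n + 2) = q * d n := by
    intro n hn
    have h := cosMoment_add_two_add_sub_two hq (n + 2)
    rw [integral_cos_int_mul_of_ne_zero (by omega)] at h
    have hqq : q * q⁻¹ = 1 := mul_inv_cancel₀ (by positivity)
    simp only [d, add_sub_cancel_right, show n + 2 + 2 = n + 4 by ring] at h ⊢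
    linear_combination h + cosMoment q n * hqq
  have hiter : ∀ k : ℕ, d (m + 2 * k) = q ^ k * d m := by
    intro k
    induction k with
    | zero => simp
    | succ k ih =>
      rw [show m + 2 * (k + 1 : ℕ) = m + 2 * k + 2 by push_cast; ring,
        hstep _ (by omega), ih, pow_succ]
      ring
  have hbound : ∀ n, |d n| ≤ (1 + q⁻¹) * cosMoment q 0 := by
    intro n
    have hq' : 0 < q⁻¹ := by positivity
    calc |d n| ≤ |cosMoment q (n + 2)| + q⁻¹ * |cosMoment q n| :=
          (abs_sub _ _).trans_eq (by rw [abs_mul, abs_of_pos hq'])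
      _ ≤ (1 + q⁻¹) * cosMoment q 0 := by
          nlinarith [abs_cosMoment_le hq (n + 2), abs_cosMoment_le hq n]
  have hd : |d m| = 0 := eq_zero_of_forall_pow_mul_le hq (abs_nonneg _) fun k => by
    have := hbound (m + 2 * k)
    rwa [hiter, abs_mul, abs_of_pos (by positivity)] at this
  simpa [d, sub_eq_zero] using hd

theorem cosMoment_one (hq : 1 < q) : cosMoment q 1 = 0 := by
  have h := cosMoment_add_two hq (m := -1) le_rfl
  rw [show (-1 : ℤ) + 2 = 1 by norm_num, cosMoment_neg] at h
  have : q⁻¹ < 1 := inv_lt_one_of_one_lt₀ hq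
  nlinarith

theorem cosMoment_zero (hq : 1 < q) : cosMoment q 0 = π / (q - q⁻¹) := by
  have h := cosMoment_add_two_add_sub_two hq 0
  have h2 := cosMoment_add_two hq (m := 0) (by norm_num)
  rw [show (0 : ℤ) - 2 = -(0 + 2) by norm_num, cosMoment_neg, h2] at h
  have : q⁻¹ < q := by linarith [inv_lt_one_of_one_lt₀ hq]
  rw [eq_div_iff (by linarith)]
  simp only [Int.cast_zero, zero_mul, cos_zero, intervalIntegral.integral_const, sub_zero,
    smul_eq_mul, mul_one] at h
  linarith

theorem cosMoment_two_mul (hq : 1 < q) (j : ℕ) :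
    cosMoment q (2 * j) = q⁻¹ ^ j * cosMoment q 0 := by
  induction j with
  | zero => simp
  | succ j ih =>
    rw [show (2 * (j + 1 : ℕ) : ℤ) = 2 * j + 2 by push_cast; ring,
      cosMoment_add_two hq (by omega), ih, pow_succ]
    ring

theorem cosMoment_two_mul_add_one (hq : 1 < q) (j : ℕ) : cosMoment q (2 * j + 1) = 0 := by
  induction j with
  | zero => simpa using cosMoment_one hq
  | succ j ih =>
    rw [show (2 * (j + 1 : ℕ) + 1 : ℤ) = 2 * j + 1 + 2 by push_cast; ring,
      cosMoment_add_two hq (by omega), ih, mul_zero]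

end cosMoment

theorem integral_sin_succ_mul_sin_div_poissonDenom {q : ℝ} (hq : 1 < q) (r : ℕ) :
    ∫ θ in 0..π, sin ((r + 1) * θ) * sin θ / poissonDenom q θ = (1 - q⁻¹) / 2 * cosMoment q r := by
  have hI := intervalIntegrable_cos_div_poissonDenom hq
  have hintegrand : ∀ θ : ℝ, sin ((r + 1) * θ) * sin θ / poissonDenom q θ =
      (cos ((r : ℤ) * θ) / poissonDenom q θ - cos ((r + 2 : ℤ) * θ) / poissonDenom q θ) / 2 := by
    intro θ
    have hprod : sin ((r + 1) * θ) * sin θ = (cos (r * θ) - cos ((r + 2) * θ)) / 2 := by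
      rw [show (r : ℝ) * θ = (r + 1) * θ - θ by ring, show ((r : ℝ) + 2) * θ = (r + 1) * θ + θ by ring,
        cos_sub, cos_add]
      ring
    push_cast
    rw [hprod]
    ring
  rw [integral_congr fun θ _ => hintegrand θ, intervalIntegral.integral_div, integral_sub (hI _) (hI _)]
  change (cosMoment q r - cosMoment q (r + 2)) / 2 = _
  rw [cosMoment_add_two hq (by omega)]
  ring

theorem continuousOn_chebX_mul_plancherel {q : ℝ} (hq : 1 < q) (r : ℕ) :
    ContinuousOn (fun x => chebX r x * ((q + 1) / ((√q + 1 / √q) ^ 2 - x ^ 2))) (Icc (-2) 2) := by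
  have hchebX : Continuous (chebX r) := by unfold chebX; fun_prop
  refine hchebX.continuousOn.mul (continuousOn_const.div (by fun_prop) fun x hx => ?_)
  rw [sqrt_add_inv_sqrt_sq (by linarith)]
  nlinarith [two_lt_add_inv hq, hx.1, hx.2]

/-- For a prime `p` and `r ≥ 0`, the integral of `X_r` against the Plancherel
measure `(p+1)/((√p + 1/√p)² - x²) dμ_∞(x)` (the measure `η_p^χ` when
`χ(p) = -1`) equals `p^{-r/2}` for `r` even and `0` for `r` odd. -/
theorem integral_chebX_plancherel (p : ℕ) (hp : p.Prime) (r : ℕ) :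
    ∫ x, chebX r x * (((p : ℝ) + 1) / ((Real.sqrt p + 1 / Real.sqrt p) ^ 2 - x ^ 2)) ∂satoTate =
      if Even r then (p : ℝ) ^ (-(r : ℝ) / 2) else 0 := by
  have hq : (1 : ℝ) < p := by exact_mod_cast hp.one_lt
  have hdensity : ∀ θ, chebX r (2 * cos θ) * ((p + 1) / ((√p + 1 / √p) ^ 2 - (2 * cos θ) ^ 2)) *
      sin θ ^ 2 = (p + 1) * (sin ((r + 1) * θ) * sin θ / poissonDenom p θ) := by
    intro θ
    rw [← chebX_two_mul_cos_mul_sin, sqrt_add_inv_sqrt_sq (by linarith), poissonDenom, cos_two_mul]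
    ring_nf
  rw [integral_satoTate_eq_integral_cos (continuousOn_chebX_mul_plancherel hq r),
    integral_congr fun θ _ => hdensity θ, intervalIntegral.integral_const_mul,
    integral_sin_succ_mul_sin_div_poissonDenom hq]
  obtain ⟨j, rfl | rfl⟩ := Nat.even_or_odd' r
  · rw [if_pos (even_two_mul j)]
    push_cast
    rw [cosMoment_two_mul hq, cosMoment_zero hq, show -(2 * (j : ℝ)) / 2 = -(j : ℕ) by ring,
      rpow_neg (by positivity), rpow_natCast, inv_pow]
    have hp2 : (p : ℝ) ^ 2 - 1 ≠ 0 := by nlinarith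
    field_simp
    ring
  · rw [if_neg (Nat.not_even_two_mul_add_one j)]
    push_cast
    rw [cosMoment_two_mul_add_one hq]
    ring
end

section
/- Let x be a real number with |x| ≤ 2 and let t be a real number with 0 < t < 1. Then ∑_{m=1}^∞ ∑_{n=0}^{m−1} ∑_{k=0}^{n} X_{m−n+2k}(x) · t^{m+n} = (1 − t²)^{−1} · ∑_{u=1}^∞ c_u · X_u(x) · t^{u}, where c_u = u/2 if u is even and c_u = (u+1)/2 if u is odd; in particular both series converge. -/
/-- `c u = u/2` if `u` is even and `(u+1)/2` if `u` is odd. -/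
noncomputable def cCoeff (u : ℕ) : ℝ :=
  if Even u then (u : ℝ) / 2 else ((u : ℝ) + 1) / 2

/-!
Put `g v = X_{v+1}(x) t^{v+1}`. Substituting `i = n - k` and `s = m - 1 - i`, the `m`-th term of the
left side becomes `∑_{i + s = m - 1} (t²)^i T s` with `T s = ∑_{k ≤ s} g (s + k)`, so the left side
is the Cauchy product of the geometric series in `t²` with `∑ T s`. Regrouping `∑ T s` by
`v = s + k` counts each `g v` exactly `⌊v/2⌋ + 1 = c_{v+1}` times. Absolute convergence comes from
`|X_ℓ(x)| ≤ ℓ + 1`, which follows by induction from `U_{n+1} = X U_n + T_{n+1}` and `|T_n| ≤ 1`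
on `[-1, 1]`.
-/

open Finset Polynomial Polynomial.Chebyshev

theorem abs_eval_U_real_le {y : ℝ} (hy : |y| ≤ 1) (n : ℕ) : |(U ℝ n).eval y| ≤ n + 1 := by
  induction n with
  | zero => simp
  | succ n ih =>
    have hrec := congrArg (eval y) (U_eq_X_mul_U_add_T ℝ (n : ℤ))
    push_cast at hrec ⊢
    rw [hrec, eval_add, eval_mul, eval_X]
    calc |y * (U ℝ n).eval y + (T ℝ (n + 1)).eval y|
        ≤ |y| * |(U ℝ n).eval y| + |(T ℝ (n + 1)).eval y| := by
          rw [← abs_mul]; exact abs_add_le _ _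
      _ ≤ 1 * (n + 1) + 1 := by gcongr; exact abs_eval_T_real_le_one _ hy
      _ = n + 1 + 1 := by ring

theorem abs_chebX_le {x : ℝ} (hx : |x| ≤ 2) (ℓ : ℕ) : |chebX ℓ x| ≤ ℓ + 1 :=
  abs_eval_U_real_le (by rw [abs_div, abs_two]; linarith) ℓ

theorem sum_range_sum_range_eq_sum_antidiagonal {R : Type*} [CommSemiring R] (g : ℕ → R) (r : R)
    (j : ℕ) :
    ∑ n ∈ range (j + 1), ∑ k ∈ range (n + 1), g (j - n + 2 * k) * r ^ (n - k) =
      ∑ p ∈ antidiagonal j, r ^ p.1 * ∑ k ∈ range (p.2 + 1), g (p.2 + k) := by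
  calc _ = ∑ n ∈ range (j + 1), ∑ i ∈ range (n + 1), r ^ i * g (j + n - 2 * i) := by
        refine sum_congr rfl fun n hn => ?_
        rw [← sum_range_reflect]
        refine sum_congr rfl fun i hi => ?_
        simp only [mem_range] at hn hi
        rw [mul_comm]
        congr 2 <;> omega
    _ = ∑ i ∈ range (j + 1), r ^ i * ∑ k ∈ range (j - i + 1), g (j - i + k) := by
        simp only [range_eq_Ico]
        rw [← sum_Ico_Ico_comm]
        refine sum_congr rfl fun i hi => ?_
        simp only [mem_Ico] at hi
        rw [mul_sum, sum_Ico_eq_sum_range]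
        refine sum_congr (by rw [range_eq_Ico, Nat.sub_add_comm (by omega)]) fun k _ => ?_
        congr 2
        omega
    _ = _ := by rw [Nat.sum_antidiagonal_eq_sum_range_succ_mk]

theorem hasSum_ite_two_mul_le {M : Type*} [AddCommMonoid M] [TopologicalSpace M] (v : ℕ)
    (e : M) :
    HasSum (fun k => if 2 * k ≤ v then e else 0) ((v / 2 + 1) • e) := by
  have hsupp : ∀ k ∉ range (v / 2 + 1), (if 2 * k ≤ v then e else 0) = 0 := by
    intro k hk
    rw [mem_range] at hk
    exact if_neg (by omega)
  have hsum : (∑ k ∈ range (v / 2 + 1), if 2 * k ≤ v then e else 0) = (v / 2 + 1) • e := by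
    rw [sum_congr rfl fun k hk => if_pos (by rw [mem_range] at hk; omega), sum_const, card_range]
  rw [← hsum]
  exact hasSum_sum_of_ne_finset_zero hsupp

section Rearrangement

variable {E : Type*} [NormedAddCommGroup E]

theorem hasSum_prod_ite_two_mul_le [CompleteSpace E] {g : ℕ → E}
    (hg : Summable fun v : ℕ => (v / 2 + 1) • ‖g v‖) :
    HasSum (fun p : ℕ × ℕ => if 2 * p.2 ≤ p.1 then g p.1 else 0) (∑' v : ℕ, (v / 2 + 1) • g v) := by
  have hnorm : Summable fun p : ℕ × ℕ => if 2 * p.2 ≤ p.1 then ‖g p.1‖ else 0 := by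
    refine (summable_prod_of_nonneg fun p => ?_).2
      ⟨fun v => (hasSum_ite_two_mul_le v ‖g v‖).summable, ?_⟩
    · dsimp only
      split_ifs <;> simp
    · simpa only [(hasSum_ite_two_mul_le _ _).tsum_eq] using hg
  have hsum : Summable fun p : ℕ × ℕ => if 2 * p.2 ≤ p.1 then g p.1 else 0 :=
    hnorm.of_norm_bounded fun p => by split_ifs <;> simp
  rw [(hsum.hasSum.prod_fiberwise fun v => hasSum_ite_two_mul_le v (g v)).tsum_eq]
  exact hsum.hasSum

theorem hasSum_sum_range_add [CompleteSpace E] {g : ℕ → E}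
    (hg : Summable fun v : ℕ => (v / 2 + 1) • ‖g v‖) :
    HasSum (fun s => ∑ k ∈ range (s + 1), g (s + k)) (∑' v : ℕ, (v / 2 + 1) • g v) := by
  set ψ : ℕ × ℕ → ℕ × ℕ := fun p => (p.1 + p.2, p.2)
  have hψ : Function.Injective ψ := by
    rintro ⟨s, k⟩ ⟨s', k'⟩ h
    simp only [ψ, Prod.mk.injEq] at h ⊢
    omega
  have hrange : ∀ p ∉ Set.range ψ, (if 2 * p.2 ≤ p.1 then g p.1 else 0) = 0 := by
    rintro ⟨v, k⟩ hp
    exact if_neg fun hk => hp ⟨(v - k, k), Prod.ext (Nat.sub_add_cancel (by omega)) rfl⟩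
  refine ((hψ.hasSum_iff hrange).2 (hasSum_prod_ite_two_mul_le hg)).prod_fiberwise fun s => ?_
  have hsupp : ∀ k ∉ range (s + 1), (if 2 * k ≤ s + k then g (s + k) else 0) = 0 := by
    intro k hk
    rw [mem_range] at hk
    exact if_neg (by omega)
  have hsum : ∑ k ∈ range (s + 1), g (s + k) =
      ∑ k ∈ range (s + 1), if 2 * k ≤ s + k then g (s + k) else 0 :=
    sum_congr rfl fun k hk => (if_pos (by rw [mem_range] at hk; omega)).symm
  rw [hsum]
  exact hasSum_sum_of_ne_finset_zero hsupp

theorem summable_norm_sum_range_add {g : ℕ → E}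
    (hg : Summable fun v : ℕ => (v / 2 + 1) • ‖g v‖) :
    Summable fun s => ‖∑ k ∈ range (s + 1), g (s + k)‖ :=
  (hasSum_sum_range_add (g := fun v => ‖g v‖) (by simpa only [norm_norm] using hg)).summable
    |>.of_nonneg_of_le (fun _ => norm_nonneg _) fun _ => norm_sum_le _ _

end Rearrangement

theorem hasSum_sum_antidiagonal_geometric_mul {𝕜 : Type*} [NormedField 𝕜] [CompleteSpace 𝕜]
    {r : 𝕜} (hr : ‖r‖ < 1) {T : ℕ → 𝕜} (hT : Summable fun s => ‖T s‖) :
    HasSum (fun j => ∑ p ∈ antidiagonal j, r ^ p.1 * T p.2) ((1 - r)⁻¹ * ∑' s, T s) := by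
  have hgeom : Summable fun i => ‖r ^ i‖ := by
    simpa only [norm_pow] using summable_geometric_of_lt_one (norm_nonneg r) hr
  rw [← tsum_geometric_of_norm_lt_one hr,
    tsum_mul_tsum_eq_tsum_sum_antidiagonal_of_summable_norm hgeom hT]
  exact (summable_norm_sum_mul_antidiagonal_of_summable_norm hgeom hT).of_norm.hasSum

theorem cCoeff_succ (v : ℕ) : cCoeff (v + 1) = (v / 2 + 1 : ℕ) := by
  rcases Nat.even_or_odd v with ⟨s, rfl⟩ | ⟨s, rfl⟩
  · rw [cCoeff, if_neg (by simp [parity_simps]), show (s + s) / 2 + 1 = s + 1 by omega]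
    push_cast; ring
  · rw [cCoeff, if_pos (by simp [parity_simps]), show (2 * s + 1) / 2 + 1 = s + 1 by omega]
    push_cast; ring

theorem summable_nsmul_norm_chebX_mul_pow {x t : ℝ} (hx : |x| ≤ 2) (ht : |t| < 1) :
    Summable fun v : ℕ => (v / 2 + 1) • ‖chebX (v + 1) x * t ^ (v + 1)‖ := by
  have hgeom : Summable fun n : ℕ => (n : ℝ) ^ 2 * |t| ^ n :=
    summable_pow_mul_geometric_of_norm_lt_one 2 (by rwa [Real.norm_eq_abs, abs_abs])
  have hbound : Summable fun v : ℕ => 2 * (((v + 1 : ℕ) : ℝ) ^ 2 * |t| ^ (v + 1)) :=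
    ((summable_nat_add_iff 1).2 hgeom).mul_left 2
  refine hbound.of_nonneg_of_le (fun v => by positivity) fun v => ?_
  have hX := abs_chebX_le hx (v + 1)
  have hcount : ((v / 2 + 1 : ℕ) : ℝ) ≤ v + 1 := by exact_mod_cast (by omega : v / 2 + 1 ≤ v + 1)
  rw [nsmul_eq_mul, norm_mul, norm_pow, Real.norm_eq_abs, Real.norm_eq_abs]
  push_cast at hX
  calc _ ≤ ((v : ℝ) + 1) * (((v : ℝ) + 1 + 1) * |t| ^ (v + 1)) := by gcongr
    _ ≤ _ := by
      push_cast
      nlinarith [mul_nonneg (mul_nonneg v.cast_nonneg (by positivity : (0 : ℝ) ≤ v + 1))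
        (pow_nonneg (abs_nonneg t) (v + 1))]

/-- For `|x| ≤ 2` and `0 < t < 1`,
`∑_{m≥1} ∑_{n=0}^{m-1} ∑_{k=0}^{n} X_{m-n+2k}(x) t^{m+n}
  = (1 - t²)⁻¹ ∑_{u≥1} c_u X_u(x) t^u`,
where `c_u = u/2` for `u` even and `(u+1)/2` for `u` odd;
in particular both series converge.  (Here the outer series on the left is
indexed by `m = j + 1`, `j ∈ ℕ`, and the series on the right by `u = j + 1`.) -/
theorem triple_sum_chebX (x : ℝ) (hx : |x| ≤ 2) (t : ℝ) (ht0 : 0 < t) (ht1 : t < 1) :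
    Summable (fun j : ℕ => ∑ n ∈ Finset.range (j + 1), ∑ k ∈ Finset.range (n + 1),
        chebX ((j + 1) - n + 2 * k) x * t ^ ((j + 1) + n)) ∧
    Summable (fun j : ℕ => cCoeff (j + 1) * chebX (j + 1) x * t ^ (j + 1)) ∧
    ∑' j : ℕ, (∑ n ∈ Finset.range (j + 1), ∑ k ∈ Finset.range (n + 1),
        chebX ((j + 1) - n + 2 * k) x * t ^ ((j + 1) + n)) =
      (1 - t ^ 2)⁻¹ * ∑' j : ℕ, cCoeff (j + 1) * chebX (j + 1) x * t ^ (j + 1) := by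
  set g : ℕ → ℝ := fun v => chebX (v + 1) x * t ^ (v + 1)
  have ht : |t| < 1 := by rwa [abs_of_pos ht0]
  have hg := summable_nsmul_norm_chebX_mul_pow hx ht
  have hlhs (j : ℕ) : ∑ n ∈ range (j + 1), ∑ k ∈ range (n + 1),
      chebX ((j + 1) - n + 2 * k) x * t ^ ((j + 1) + n) =
        ∑ p ∈ antidiagonal j, (t ^ 2) ^ p.1 * ∑ k ∈ range (p.2 + 1), g (p.2 + k) := by
    rw [← sum_range_sum_range_eq_sum_antidiagonal]
    refine sum_congr rfl fun n hn => sum_congr rfl fun k hk => ?_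
    simp only [mem_range] at hn hk
    rw [mul_assoc, ← pow_mul, ← pow_add, show j + 1 - n + 2 * k = j - n + 2 * k + 1 by omega,
      show j + 1 + n = j - n + 2 * k + 1 + 2 * (n - k) by omega]
  have hrhs (j : ℕ) : cCoeff (j + 1) * chebX (j + 1) x * t ^ (j + 1) = (j / 2 + 1) • g j := by
    rw [cCoeff_succ, nsmul_eq_mul, mul_assoc]
  have hsq : ‖t ^ 2‖ < 1 := by
    rw [norm_pow, Real.norm_eq_abs]; exact pow_lt_one₀ (abs_nonneg t) ht two_ne_zero
  have hsum := hasSum_sum_antidiagonal_geometric_mul hsq (summable_norm_sum_range_add hg)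
  simp only [hlhs, hrhs]
  refine ⟨hsum.summable, .of_norm (hg.congr fun v => (RCLike.norm_nsmul ℝ _ _).symm), ?_⟩
  rw [hsum.tsum_eq, (hasSum_sum_range_add hg).tsum_eq]
end
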